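/- arXiv:1403.2540 — 2 statements merged into one kernel-verified Lean document; each statement's English description precedes it below -/
import Mathlib

section
/- Let X be a set with two topologies D and S such that S is finer than D, D is compact, every basic S-open set is D-closed, and the S-topology has a basis B consisting of D-closed sets with the property that every nonempty S-open set contains a nonempty member of B. Then X with the topology S has the Baire property: the intersection of countably many dense S-open sets is S-dense. -/
/-- Baire property for the spectral topology: let `D` be a compact topology on `X` and `S` a
finer topology with a basis `B` of `D`-closed sets such that every nonempty `S`-open set
contains a nonempty member of `B`. Then the intersection of countably many dense `S`-open
sets is `S`-dense. -/
theorem stmt_3 {X : Type*} (D S : TopologicalSpace X)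
    (hfiner : ∀ s : Set X, D.IsOpen s → S.IsOpen s)
    (hcompact : @CompactSpace X D)
    (B : Set (Set X))
    (hbasis : @TopologicalSpace.IsTopologicalBasis X S B)
    (hclosed : ∀ b ∈ B, @IsClosed X D b)
    (hne : ∀ O : Set X, S.IsOpen O → O.Nonempty → ∃ b ∈ B, b ⊆ O ∧ b.Nonempty)
    (U : ℕ → Set X) (hUopen : ∀ n, S.IsOpen (U n)) (hUdense : ∀ n, @Dense X S (U n)) :
    @Dense X S (⋂ n, U n) := by
  classical
  letI := S
  rw [dense_iff_inter_open]
  intro O hO hOne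
  -- From a nonempty S-open set and an index n, get a nonempty basic set inside it ∩ U n
  have key : ∀ (A : Set X) (n : ℕ), S.IsOpen A → A.Nonempty →
      ∃ b ∈ B, b ⊆ A ∩ U n ∧ b.Nonempty := by
    intro A n hA hAne
    have hA' : @IsOpen X S A := hA
    have hU' : @IsOpen X S (U n) := hUopen n
    exact hne (A ∩ U n) (hA'.inter hU')
      ((hUdense n).inter_open_nonempty A hA hAne)
  have step : ∀ (p : {A : Set X // A ∈ B ∧ A.Nonempty}) (n : ℕ),
      ∃ q : {A : Set X // A ∈ B ∧ A.Nonempty}, q.1 ⊆ p.1 ∩ U n := by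
    intro p n
    obtain ⟨b, hbB, hbsub, hbne⟩ := key p.1 n (hbasis.isOpen p.2.1) p.2.2
    exact ⟨⟨b, hbB, hbne⟩, hbsub⟩
  choose g hg using step
  obtain ⟨b0, hb0B, hb0sub, hb0ne⟩ := key O 0 hO hOne
  let f : ℕ → {A : Set X // A ∈ B ∧ A.Nonempty} :=
    fun n => Nat.rec ⟨b0, hb0B, hb0ne⟩ (fun n p => g p (n + 1)) n
  have hf : ∀ n, (f (n + 1)).1 ⊆ (f n).1 ∩ U (n + 1) := fun n => hg (f n) (n + 1)
  have hVsub : ∀ n, (f n).1 ⊆ U n := by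
    intro n
    cases n with
    | zero => exact hb0sub.trans (Set.inter_subset_right)
    | succ n => exact (hf n).trans (Set.inter_subset_right)
  have hVdec : ∀ n, (f (n + 1)).1 ⊆ (f n).1 := fun n => (hf n).trans Set.inter_subset_left
  haveI := hcompact
  have hnonempty : (⋂ n, (f n).1).Nonempty := by
    apply @IsCompact.nonempty_iInter_of_sequence_nonempty_isCompact_isClosed X D _ hVdec
      (fun n => (f n).2.2)
    · exact @IsClosed.isCompact X D _ hcompact (hclosed _ (f 0).2.1)
    · exact fun n => hclosed _ (f n).2.1
  obtain ⟨x, hx⟩ := hnonempty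
  refine ⟨x, ?_, ?_⟩
  · exact hb0sub.trans Set.inter_subset_left (Set.mem_iInter.1 hx 0)
  · exact Set.mem_iInter.2 fun n => hVsub n (Set.mem_iInter.1 hx n)
end

section
/- In an inductive class (a class of L-structures closed under colimits of directed systems of homomorphisms) that is nonempty, every structure in the class admits a homomorphism into a positively existentially closed structure of the class, where A is positively existentially closed if every homomorphism from A into a member of the class reflects positive existential formulas (is an immersion). -/
universe u v w

open FirstOrder FirstOrder.Language

/-- Positive existential formulas: built from atomic formulas by finite conjunctions, finite
disjunctions and existential quantifications. -/
inductive IsPE {L : FirstOrder.Language.{u, v}} {α : Type*} :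
    {n : ℕ} → L.BoundedFormula α n → Prop
  | atomic {n : ℕ} {φ : L.BoundedFormula α n} (h : φ.IsAtomic) : IsPE φ
  | inf {n : ℕ} {φ ψ : L.BoundedFormula α n} : IsPE φ → IsPE ψ → IsPE (φ ⊓ ψ)
  | sup {n : ℕ} {φ ψ : L.BoundedFormula α n} : IsPE φ → IsPE ψ → IsPE (φ ⊔ ψ)
  | ex {n : ℕ} {φ : L.BoundedFormula α (n + 1)} : IsPE φ → IsPE φ.ex

/-!
Since `C` is inductive, the category of members of `C` and homomorphisms has directed colimits,
so successor structures can be iterated transfinitely in it (`SmallObject.SuccStruct.iteration`).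

Over a member `A`, keep realizing some positive existential requirement (a formula with
parameters from `A`) that is not yet realized but becomes realized in some continuation. Since
positive existential formulas are preserved by homomorphisms, distinct stages realize distinct
new requirements, so along a well-order larger than the set of requirements the process must
stop: its limit `B` realizes every requirement that some continuation of `B` realizes.

Iterating `A ↦ B` through `ω` gives `N`: a tuple of `N` comes from some stage, and the next stage
already realizes every positive existential formula about it that holds in a continuation.
-/

open CategoryTheory Limits

namespace IsPE

variable {L : FirstOrder.Language.{u, v}} {M N : Type*} [L.Structure M] [L.Structure N]

theorem realize_hom (g : M →[L] N) {α : Type*} {n : ℕ} {φ : L.BoundedFormula α n}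
    (hφ : IsPE φ) {v : α → M} {xs : Fin n → M} (h : φ.Realize v xs) :
    φ.Realize (g ∘ v) (g ∘ xs) := by
  induction hφ with
  | atomic hat =>
    have hcomp : Sum.elim (g ∘ v) (g ∘ xs) = g ∘ Sum.elim v xs := by
      funext x; cases x <;> rfl
    cases hat with
    | equal t₁ t₂ =>
      rw [BoundedFormula.realize_bdEqual] at h ⊢
      rw [hcomp, HomClass.realize_term, HomClass.realize_term, h]
    | rel R ts =>
      rw [BoundedFormula.realize_rel] at h ⊢
      simp only [hcomp, HomClass.realize_term]
      exact g.map_rel R _ h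
  | inf _ _ ih₁ ih₂ =>
    rw [BoundedFormula.realize_inf] at h ⊢
    exact ⟨ih₁ h.1, ih₂ h.2⟩
  | sup _ _ ih₁ ih₂ =>
    rw [BoundedFormula.realize_sup] at h ⊢
    exact h.imp ih₁ ih₂
  | ex _ ih =>
    rw [BoundedFormula.realize_ex] at h ⊢
    obtain ⟨x, hx⟩ := h
    exact ⟨g x, by simpa only [Fin.comp_snoc] using ih hx⟩

theorem realize_formula_hom (g : M →[L] N) {α : Type*} {φ : L.Formula α} (hφ : IsPE φ)
    {v : α → M} (h : φ.Realize v) : φ.Realize (g ∘ v) := by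
  simpa only [Formula.Realize, Subsingleton.elim (g ∘ default) default] using
    realize_hom g hφ h

end IsPE

theorem CategoryTheory.Limits.hasIterationOfShape_of_linearOrder {D : Type*} [Category D]
    (J : Type w) [LinearOrder J] [OrderBot J] [SuccOrder J]
    (h : ∀ (K : Type w) [LinearOrder K] [Nonempty K], HasColimitsOfShape K D) :
    HasIterationOfShape J D where
  hasColimitsOfShape_of_isSuccLimit _ hj :=
    haveI := hj.nonempty_Iio.to_subtype
    h _
  hasColimitsOfShape := h J

/-- The four conditions on `N` say that it is the colimit of the system `f`. -/
def IsInductiveClass (L : FirstOrder.Language.{u, v})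
    (C : (M : Type w) → L.Structure M → Prop) : Prop :=
  ∀ (ι : Type w) (_ : Preorder ι), IsDirected ι (· ≤ ·) → Nonempty ι →
    ∀ (G : ι → Type w) (instG : ∀ i, L.Structure (G i))
      (f : ∀ i j, i ≤ j → (@Hom L (G i) (G j) (instG i) (instG j))),
      (∀ i (a : G i), (f i i le_rfl).toFun a = a) →
      (∀ i j k (hij : i ≤ j) (hjk : j ≤ k) (a : G i),
        (f j k hjk).toFun ((f i j hij).toFun a) = (f i k (le_trans hij hjk)).toFun a) →
      (∀ i, C (G i) (instG i)) →
      ∀ (N : Type w) (instN : L.Structure N) (g : ∀ i, @Hom L (G i) N (instG i) instN),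
        (∀ i j (h : i ≤ j) (a : G i), (g j).toFun ((f i j h).toFun a) = (g i).toFun a) →
        (∀ x : N, ∃ i, ∃ a : G i, (g i).toFun a = x) →
        (∀ i (l : ℕ) (R : L.Relations l) (a : Fin l → G i),
          @Structure.RelMap L N instN l R (fun k => (g i).toFun (a k)) →
          ∃ j, ∃ h : i ≤ j,
            @Structure.RelMap L (G j) (instG j) l R fun k => (f i j h).toFun (a k)) →
        (∀ i (a b : G i), (g i).toFun a = (g i).toFun b →
          ∃ j, ∃ h : i ≤ j, (f i j h).toFun a = (f i j h).toFun b) →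
        C N instN

structure Member {L : FirstOrder.Language.{u, v}} (C : (M : Type w) → L.Structure M → Prop) :
    Type (max u v (w + 1)) where
  carrier : Type w
  [str : L.Structure carrier]
  mem : C carrier str

namespace Member

open Structure

variable {L : FirstOrder.Language.{u, v}} {C : (M : Type w) → L.Structure M → Prop}

attribute [instance] Member.str

instance : CoeSort (Member C) (Type w) := ⟨Member.carrier⟩

instance : Category (Member C) where
  Hom X Y := X →[L] Y
  id X := Hom.id L X
  comp f g := g.comp f

instance {X Y : Member C} : FunLike (X ⟶ Y) X Y := inferInstanceAs (FunLike (X →[L] Y) X Y)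

instance {X Y : Member C} : HomClass L (X ⟶ Y) X Y :=
  inferInstanceAs (HomClass L (X →[L] Y) X Y)

@[simp]
theorem id_apply (X : Member C) (x : X) : (𝟙 X : X ⟶ X) x = x := rfl

@[simp]
theorem comp_apply {X Y Z : Member C} (f : X ⟶ Y) (g : Y ⟶ Z) (x : X) : (f ≫ g) x = g (f x) :=
  rfl

@[ext]
theorem hom_ext {X Y : Member C} {f g : X ⟶ Y} (h : ∀ x, f x = g x) : f = g :=
  DFunLike.ext _ _ h

section Colimit

variable {J : Type w} [Preorder J] (F : J ⥤ Member C)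

theorem map_homOfLE_self (i : J) (x : F.obj i) : F.map (homOfLE (le_refl i)) x = x := by
  rw [show homOfLE (le_refl i) = 𝟙 i from rfl, F.map_id]; rfl

theorem map_homOfLE_map {i j k : J} (hij : i ≤ j) (hjk : j ≤ k) (x : F.obj i) :
    F.map (homOfLE hjk) (F.map (homOfLE hij) x) = F.map (homOfLE (hij.trans hjk)) x := by
  rw [← comp_apply, ← F.map_comp]; rfl

instance directedSystem : DirectedSystem (fun j => (F.obj j : Type w))
    fun i j (h : i ≤ j) => ⇑(F.map (homOfLE h)) where
  map_self := map_homOfLE_self F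
  map_map _ _ _ := map_homOfLE_map F

variable [IsDirectedOrder J]

abbrev ColimitType : Type w :=
  DirectLimit (fun j => (F.obj j : Type w)) fun i j (h : i ≤ j) => F.map (homOfLE h)

variable {F}

def colimitMk (i : J) (x : F.obj i) : ColimitType F := ⟦⟨i, x⟩⟧

theorem colimitMk_map {i j : J} (h : i ≤ j) (x : F.obj i) :
    colimitMk j (F.map (homOfLE h) x) = colimitMk i x :=
  DirectLimit.mk_apply (F := fun j => (F.obj j : Type w))
    (f := fun i j (h : i ≤ j) => F.map (homOfLE h)) i j x h

variable [Nonempty J]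

theorem exists_colimitMk_tuple {n : ℕ} (v : Fin n → ColimitType F) :
    ∃ (i : J) (w : Fin n → F.obj i), ∀ k, colimitMk i (w k) = v k := by
  choose j x hx using fun k => DirectLimit.exists_eq_mk _ (v k)
  obtain ⟨i, hi⟩ := Finite.exists_le j
  exact ⟨i, fun k => F.map (homOfLE (hi k)) (x k), fun k => by rw [colimitMk_map, hx]; rfl⟩

theorem exists_map_eq_of_colimitMk_eq {n : ℕ} {i j : J} {w : Fin n → F.obj i}
    {w' : Fin n → F.obj j} (h : ∀ k, colimitMk i (w k) = colimitMk j (w' k)) :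
    ∃ (m : J) (hi : i ≤ m) (hj : j ≤ m),
      ∀ k, F.map (homOfLE hi) (w k) = F.map (homOfLE hj) (w' k) := by
  choose m hik hjk hm using fun k => Quotient.exact (h k)
  obtain ⟨m₀, him₀, hjm₀⟩ := directed_of (· ≤ ·) i j
  obtain ⟨M, hM⟩ := Finite.exists_le (Option.elim · m₀ m)
  refine ⟨M, him₀.trans (hM none), hjm₀.trans (hM none), fun k => ?_⟩
  have hkM : m k ≤ M := hM (some k)
  rw [← map_homOfLE_map F (hik k) hkM, ← map_homOfLE_map F (hjk k) hkM]
  exact congrArg _ (hm k)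

/-- Operations are computed at some stage containing the arguments; by `funMap_colimitMk` any
such stage gives the same result. -/
noncomputable instance : L.Structure (ColimitType F) where
  funMap f v := colimitMk _ (funMap f (exists_colimitMk_tuple v).choose_spec.choose)
  RelMap r v := ∃ (i : J) (w : Fin _ → F.obj i), (∀ k, colimitMk i (w k) = v k) ∧ RelMap r w

theorem funMap_colimitMk {n : ℕ} (f : L.Functions n) (i : J) (w : Fin n → F.obj i) :
    funMap f (fun k => colimitMk i (w k)) = colimitMk i (funMap f w) := by
  have hw := exists_colimitMk_tuple fun k => colimitMk i (w k)
  obtain ⟨m, hi', hi, hm⟩ := exists_map_eq_of_colimitMk_eq hw.choose_spec.choose_spec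
  show colimitMk _ (funMap f hw.choose_spec.choose) = _
  rw [← colimitMk_map hi', ← colimitMk_map hi, HomClass.map_fun, HomClass.map_fun]
  exact congrArg _ (congrArg _ (funext hm))

theorem relMap_colimitMk_iff {n : ℕ} (r : L.Relations n) (i : J) (w : Fin n → F.obj i) :
    RelMap r (fun k => colimitMk i (w k)) ↔
      ∃ (m : J) (h : i ≤ m), RelMap r (fun k => F.map (homOfLE h) (w k)) := by
  constructor
  · rintro ⟨i', w', hw', hr⟩
    obtain ⟨m, hi', hi, hm⟩ := exists_map_eq_of_colimitMk_eq hw'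
    refine ⟨m, hi, ?_⟩
    simp only [← hm]
    exact HomClass.map_rel (F.map (homOfLE hi')) r w' hr
  · rintro ⟨m, h, hr⟩
    exact ⟨m, _, fun k => colimitMk_map h (w k), hr⟩

noncomputable def toColimit (i : J) : F.obj i →[L] ColimitType F where
  toFun := colimitMk i
  map_fun' f w := (funMap_colimitMk f i w).symm
  map_rel' r w hr :=
    (relMap_colimitMk_iff r i w).2 ⟨i, le_rfl, by simpa only [map_homOfLE_self] using hr⟩

theorem mem_colimitType (hC : IsInductiveClass L C) : C (ColimitType F) inferInstance := by
  refine hC J inferInstance inferInstance inferInstance (fun j => F.obj j)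
    (fun j => (F.obj j).str) (fun i j h => F.map (homOfLE h)) (map_homOfLE_self F)
    (fun _ _ _ => map_homOfLE_map F) (fun j => (F.obj j).mem) (ColimitType F) _ toColimit
    (fun i j h => colimitMk_map h) ?_ ?_ ?_
  · exact fun x => (DirectLimit.exists_eq_mk _ x).imp fun i ⟨a, ha⟩ => ⟨a, ha.symm⟩
  · exact fun i n r w hr => (relMap_colimitMk_iff r i w).1 hr
  · intro i a b hab
    obtain ⟨m, hi, _, hm⟩ := exists_map_eq_of_colimitMk_eq (n := 1) (w := fun _ => a)
      (w' := fun _ => b) fun _ => hab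
    exact ⟨m, hi, hm 0⟩

variable (F) in
noncomputable def colimitCocone (hC : IsInductiveClass L C) : Cocone F where
  pt := ⟨ColimitType F, mem_colimitType hC⟩
  ι :=
    { app i := toColimit i
      naturality i j f := by
        ext x
        exact colimitMk_map (leOfHom f) x }

variable (F) in
noncomputable def isColimitColimitCocone (hC : IsInductiveClass L C) :
    IsColimit (colimitCocone F hC) where
  desc s :=
    { toFun := DirectLimit.lift _ (fun i x => s.ι.app i x) fun i j h x => by
        rw [← comp_apply, s.w]
      map_fun' f v := by
        obtain ⟨i, w, hw⟩ := exists_colimitMk_tuple v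
        obtain rfl : v = fun k => colimitMk i (w k) := funext fun k => (hw k).symm
        show DirectLimit.lift _ _ _ (funMap f fun k => colimitMk i (w k)) = _
        rw [funMap_colimitMk]
        exact HomClass.map_fun (s.ι.app i) f w
      map_rel' r v := by
        rintro ⟨i, w, hw, hr⟩
        obtain rfl : v = fun k => colimitMk i (w k) := funext fun k => (hw k).symm
        exact HomClass.map_rel (s.ι.app i) r w hr }
  fac s j := rfl
  uniq s m hm := by
    ext x
    obtain ⟨i, x, rfl⟩ := DirectLimit.exists_eq_mk _ x
    exact congrArg (· x) (hm i)

theorem exists_tuple_of_isColimit (hC : IsInductiveClass L C) {c : Cocone F}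
    (hc : IsColimit c) {n : ℕ} (v : Fin n → c.pt) :
    ∃ (i : J) (w : Fin n → F.obj i), ∀ k, c.ι.app i (w k) = v k := by
  let e := (isColimitColimitCocone F hC).coconePointUniqueUpToIso hc
  obtain ⟨i, w, hw⟩ := exists_colimitMk_tuple fun k => e.inv (v k)
  refine ⟨i, w, fun k => ?_⟩
  rw [← (isColimitColimitCocone F hC).comp_coconePointUniqueUpToIso_hom hc i, comp_apply]
  show e.hom (colimitMk i (w k)) = v k
  rw [hw, ← comp_apply, e.inv_hom_id, id_apply]

end Colimit

theorem hasColimitsOfShape (hC : IsInductiveClass L C) (J : Type w) [Preorder J]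
    [IsDirectedOrder J] [Nonempty J] : HasColimitsOfShape J (Member C) :=
  ⟨fun F => ⟨⟨⟨_, isColimitColimitCocone F hC⟩⟩⟩⟩

theorem hasColimitsOfShape_under (hC : IsInductiveClass L C) (J : Type w) [Preorder J]
    [IsDirectedOrder J] [Nonempty J] (A : Member C) : HasColimitsOfShape J (Under A) :=
  haveI := hasColimitsOfShape hC J
  haveI := IsFiltered.isConnected J
  inferInstance

section Requirements

variable {A : Member C}

variable (A) in
abbrev Requirement : Type (max u v w) := Σ n, L.Formula (Fin n) × (Fin n → A)

def Realizes (X : Under A) (r : Requirement A) : Prop :=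
  r.2.1.Realize fun k => X.hom (r.2.2 k)

theorem Realizes.map {X Y : Under A} (f : X ⟶ Y) {r : Requirement A} (hr : IsPE r.2.1)
    (h : Realizes X r) : Realizes Y r := by
  unfold Realizes
  rw [← Under.w f]
  exact IsPE.realize_formula_hom f.right hr h

def Pending (X : Under A) (r : Requirement A) : Prop :=
  IsPE r.2.1 ∧ ¬ Realizes X r ∧ ∃ (Y : Under A) (_ : X ⟶ Y), Realizes Y r

theorem Pending.of_hom {X Y : Under A} (f : X ⟶ Y) {r : Requirement A} (h : Pending Y r) :
    Pending X r := by
  obtain ⟨hr, hY, Z, g, hZ⟩ := h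
  exact ⟨hr, fun hX => hY (hX.map f hr), Z, f ≫ g, hZ⟩

theorem realizes_of_not_pending {X : Under A} {r : Requirement A} (hX : ¬ Pending X r)
    (hr : IsPE r.2.1) {P : Member C} (g : X.right ⟶ P)
    (hP : r.2.1.Realize fun k => g (X.hom (r.2.2 k))) : Realizes X r := by
  by_contra hn
  exact hX ⟨hr, hn, Under.mk (X.hom ≫ g), Under.homMk g, hP⟩

theorem exists_hom_realizes_pending (X : Under A) : ∃ (Y : Under A) (_ : X ⟶ Y),
    (∃ r, Pending X r) → ∃ r, Pending X r ∧ Realizes Y r := by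
  by_cases h : ∃ r, Pending X r
  · obtain ⟨r, hr⟩ := h
    obtain ⟨Y, f, hY⟩ := hr.2.2
    exact ⟨Y, f, fun _ => ⟨r, hr, hY⟩⟩
  · exact ⟨X, 𝟙 X, fun h' => absurd h' h⟩

variable (A) in
noncomputable def pendingStep : SmallObject.SuccStruct (Under A) where
  X₀ := Under.mk (𝟙 A)
  succ X := (exists_hom_realizes_pending X).choose
  toSucc X := (exists_hom_realizes_pending X).choose_spec.choose

theorem exists_pending_realizes_succ {X : Under A} (h : ∃ r, Pending X r) :
    ∃ r, Pending X r ∧ Realizes ((pendingStep A).succ X) r :=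
  (exists_hom_realizes_pending X).choose_spec.choose_spec h

theorem exists_not_pending (hC : IsInductiveClass L C) (A : Member C)
    [Small.{w} (Requirement A)] : ∃ B : Under A, ∀ r, ¬ Pending B r := by
  let κ : Cardinal.{w} :=
    Order.succ (max Cardinal.aleph0 (Cardinal.mk (Shrink.{w} (Requirement A))))
  have hκ : Cardinal.aleph0 ≤ κ := (le_max_left _ _).trans (Order.le_succ _)
  let J := κ.ord.ToType
  have : NoMaxOrder J := Cardinal.noMaxOrder hκ
  have : Nonempty J := Cardinal.nonempty_ord_toType (Cardinal.aleph0_pos.trans_le hκ).ne'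
  let : OrderBot J := WellFoundedLT.toOrderBot J
  have := hasIterationOfShape_of_linearOrder J fun K _ _ => hasColimitsOfShape_under hC K A
  let Φ := pendingStep A
  let X := Φ.iterationFunctor J
  refine ⟨Φ.iteration J, fun r₀ hr₀ => ?_⟩
  have hpend (j : J) : Pending (X.obj j) r₀ := hr₀.of_hom ((Φ.iterationCocone J).ι.app j)
  choose r hr using fun j => exists_pending_realizes_succ ⟨r₀, hpend j⟩
  have hsucc (j : J) : Realizes (X.obj (Order.succ j)) (r j) :=
    (hr j).2.map (Φ.iterationFunctorObjSuccIso j (not_isMax j)).inv (hr j).1.1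
  have hinj : Function.Injective r := Function.Injective.of_lt_imp_ne fun j k hjk hrjk =>
    (hr k).1.2.1 (hrjk ▸ (hsucc j).map (X.map (homOfLE (Order.succ_le_of_lt hjk))) (hr j).1.1)
  have hcard := Cardinal.mk_le_of_injective ((equivShrink _).injective.comp hinj)
  rw [Cardinal.mk_ord_toType] at hcard
  exact (Order.lt_succ _).not_ge (hcard.trans (le_max_right _ _))

end Requirements

def IsPEClosed (N : Member C) : Prop :=
  ∀ (P : Member C) (h : N ⟶ P) (n : ℕ) (φ : L.Formula (Fin n)), IsPE φ →
    ∀ a : Fin n → N, (φ.Realize fun k => h (a k)) → φ.Realize a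

open SmallObject in
theorem isPEClosed_iteration (hC : IsInductiveClass L C) (Φ : SuccStruct (Member C))
    (hΦ : ∀ X r, ¬ Pending (Under.mk (Φ.toSucc X)) r) (J : Type w) [LinearOrder J] [OrderBot J]
    [SuccOrder J] [WellFoundedLT J] [NoMaxOrder J] [HasIterationOfShape J (Member C)] :
    IsPEClosed (Φ.iteration J) := by
  intro P h n φ hφ a ha
  let F := Φ.iterationFunctor J
  obtain ⟨j, w, hw⟩ := exists_tuple_of_isColimit hC (colimit.isColimit F) a
  let g : Φ.succ (F.obj j) ⟶ colimit F :=
    (Φ.iterationFunctorObjSuccIso j (not_isMax j)).inv ≫ colimit.ι F (Order.succ j)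
  have hg : Φ.toSucc (F.obj j) ≫ g = colimit.ι F j := by
    rw [← Category.assoc, ← Φ.iterationFunctor_map_succ, colimit.w]
  have hgw (k : Fin n) : g (Φ.toSucc (F.obj j) (w k)) = a k := by
    rw [← comp_apply, hg, ← hw k]; rfl
  have hB : Realizes (Under.mk (Φ.toSucc (F.obj j))) ⟨n, φ, w⟩ :=
    realizes_of_not_pending (hΦ _ _) hφ (g ≫ h) <| by
      convert ha using 2 with k
      exact congrArg h (hgw k)
  have hN : φ.Realize (g ∘ fun k => Φ.toSucc (F.obj j) (w k)) :=
    IsPE.realize_formula_hom g hφ hB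
  rwa [show (g ∘ fun k => Φ.toSucc (F.obj j) (w k)) = a from funext hgw] at hN

open SmallObject in
noncomputable def closingStep (hC : IsInductiveClass L C) [Countable L.Symbols]
    (M : Member C) : SuccStruct (Member C) where
  X₀ := M
  succ X := (exists_not_pending hC X).choose.right
  toSucc X := (exists_not_pending hC X).choose.hom

open SmallObject in
theorem exists_hom_isPEClosed (hC : IsInductiveClass L C) [Countable L.Symbols]
    (M : Member C) : ∃ (N : Member C) (_ : M ⟶ N), IsPEClosed N := by
  let J := Cardinal.aleph0.{w}.ord.ToType
  have : NoMaxOrder J := Cardinal.noMaxOrder le_rfl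
  let : OrderBot J := Cardinal.orderBotAleph0OrdToType
  have := hasIterationOfShape_of_linearOrder J fun K _ _ => hasColimitsOfShape hC K
  let Φ := closingStep hC M
  exact ⟨Φ.iteration J, Φ.ιIteration J,
    isPEClosed_iteration hC Φ (fun X => (exists_not_pending hC X).choose_spec) J⟩

end Member

theorem stmt_13_general (L : FirstOrder.Language.{u, v}) (hL : L.card ≤ Cardinal.aleph0)
    (C : (M : Type w) → L.Structure M → Prop)
    -- `C` is closed under directed colimits of homomorphisms:
    (hclosed : ∀ (ι : Type w) (_ : Preorder ι), IsDirected ι (· ≤ ·) → Nonempty ι →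
      ∀ (G : ι → Type w) (instG : ∀ i, L.Structure (G i))
        (f : ∀ i j, i ≤ j → (@Hom L (G i) (G j) (instG i) (instG j))),
        (∀ i (a : G i), (f i i le_rfl).toFun a = a) →
        (∀ i j k (hij : i ≤ j) (hjk : j ≤ k) (a : G i),
          (f j k hjk).toFun ((f i j hij).toFun a) = (f i k (le_trans hij hjk)).toFun a) →
        (∀ i, C (G i) (instG i)) →
        -- any colimit of the system lies in `C`:
        ∀ (N : Type w) (instN : L.Structure N) (g : ∀ i, @Hom L (G i) N (instG i) instN),
          (∀ i j (h : i ≤ j) (a : G i), (g j).toFun ((f i j h).toFun a) = (g i).toFun a) →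
          (∀ x : N, ∃ i, ∃ a : G i, (g i).toFun a = x) →
          (∀ i (l : ℕ) (R : L.Relations l) (a : Fin l → G i),
            @Structure.RelMap L N instN l R (fun k => (g i).toFun (a k)) →
            ∃ j, ∃ h : i ≤ j,
              @Structure.RelMap L (G j) (instG j) l R fun k => (f i j h).toFun (a k)) →
          (∀ i (a b : G i), (g i).toFun a = (g i).toFun b →
            ∃ j, ∃ h : i ≤ j, (f i j h).toFun a = (f i j h).toFun b) →
          C N instN) :
    ∀ (M : Type w) (instM : L.Structure M), C M instM →
      ∃ (N : Type w) (instN : L.Structure N), C N instN ∧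
        ∃ _ : @Hom L M N instM instN,
          -- `N` is positively existentially closed in `C`:
          ∀ (P : Type w) (instP : L.Structure P), C P instP →
            ∀ (h : @Hom L N P instN instP) (n : ℕ) (φ : L.Formula (Fin n)), IsPE φ →
              ∀ a : Fin n → N,
                @Formula.Realize L P instP _ φ (fun k => h.toFun (a k)) →
                @Formula.Realize L N instN _ φ a := by
  intro M instM hM
  have : Countable L.Symbols := Cardinal.mk_le_aleph0_iff.mp hL
  obtain ⟨N, f, hN⟩ := Member.exists_hom_isPEClosed hclosed ⟨M, hM⟩
  exact ⟨N, N.str, N.mem, f, fun P _ hP => hN ⟨P, hP⟩⟩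

/-- In a nonempty inductive class (a class of structures of a countable language closed under
directed colimits of homomorphisms), every structure admits a homomorphism into a positively
existentially closed member, i.e. one all of whose homomorphisms into members of the class
reflect positive existential formulas (are immersions). -/
theorem stmt_13 (L : FirstOrder.Language.{u, v}) (hL : L.card ≤ Cardinal.aleph0)
    (C : (M : Type w) → L.Structure M → Prop)
    (hne : ∃ (M : Type w) (inst : L.Structure M), C M inst)
    -- `C` is closed under directed colimits of homomorphisms:
    (hclosed : ∀ (ι : Type w) (_ : Preorder ι), IsDirected ι (· ≤ ·) → Nonempty ι →
      ∀ (G : ι → Type w) (instG : ∀ i, L.Structure (G i))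
        (f : ∀ i j, i ≤ j → (@Hom L (G i) (G j) (instG i) (instG j))),
        (∀ i (a : G i), (f i i le_rfl).toFun a = a) →
        (∀ i j k (hij : i ≤ j) (hjk : j ≤ k) (a : G i),
          (f j k hjk).toFun ((f i j hij).toFun a) = (f i k (le_trans hij hjk)).toFun a) →
        (∀ i, C (G i) (instG i)) →
        -- any colimit of the system lies in `C`:
        ∀ (N : Type w) (instN : L.Structure N) (g : ∀ i, @Hom L (G i) N (instG i) instN),
          (∀ i j (h : i ≤ j) (a : G i), (g j).toFun ((f i j h).toFun a) = (g i).toFun a) →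
          (∀ x : N, ∃ i, ∃ a : G i, (g i).toFun a = x) →
          (∀ i (l : ℕ) (R : L.Relations l) (a : Fin l → G i),
            @Structure.RelMap L N instN l R (fun k => (g i).toFun (a k)) →
            ∃ j, ∃ h : i ≤ j,
              @Structure.RelMap L (G j) (instG j) l R fun k => (f i j h).toFun (a k)) →
          (∀ i (a b : G i), (g i).toFun a = (g i).toFun b →
            ∃ j, ∃ h : i ≤ j, (f i j h).toFun a = (f i j h).toFun b) →
          C N instN) :
    ∀ (M : Type w) (instM : L.Structure M), C M instM →
      ∃ (N : Type w) (instN : L.Structure N), C N instN ∧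
        ∃ _ : @Hom L M N instM instN,
          -- `N` is positively existentially closed in `C`:
          ∀ (P : Type w) (instP : L.Structure P), C P instP →
            ∀ (h : @Hom L N P instN instP) (n : ℕ) (φ : L.Formula (Fin n)), IsPE φ →
              ∀ a : Fin n → N,
                @Formula.Realize L P instP _ φ (fun k => h.toFun (a k)) →
                @Formula.Realize L N instN _ φ a :=
  stmt_13_general L hL C hclosed
end
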